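/- arXiv:1811.02979 — 3 statements merged into one kernel-verified Lean document; each statement's English description precedes it below -/
import Mathlib

section
/- The derivatives of f(x) = log(1 + exp(x)) at zero satisfy f^{(q)}(0) = (1/2^q) * sum_{m=0}^{q-2} (-1)^m A(q-1, m), where A(n, m) denotes the Eulerian numbers. -/
/-!
Since `d/dx log (1 + eˣ) = σ(x)` is the logistic sigmoid and `σ' = σ (1 - σ)`, every derivative of
`σ` is a polynomial in `σ`: `σ⁽ⁿ⁾ = Pₙ(σ)` with `Pₙ₊₁ = X (1 - X) Pₙ'`. The Eulerian recurrence is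
exactly what makes `Pₙ = ∑ₘ (-1)ᵐ A(n, m) Xᵐ⁺¹ (1 - X)ⁿ⁻ᵐ` satisfy this. At `x = 0` we have
`σ = 1 - σ = 1/2`, so every monomial of `Pₙ` contributes `2⁻⁽ⁿ⁺¹⁾`.
-/

/-- Eulerian numbers `A n m`: number of permutations of `{1,...,n}` with exactly `m` descents. -/
def eulerianNumber : ℕ → ℕ → ℕ
  | 0, 0 => 1
  | 0, _ + 1 => 0
  | n + 1, 0 => 1
  | n + 1, m + 1 => (m + 2) * eulerianNumber n (m + 1) + (n - m) * eulerianNumber n m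

open Polynomial Real Finset

theorem eulerianNumber_zero_right (n : ℕ) : eulerianNumber n 0 = 1 := by
  cases n <;> rfl

theorem eulerianNumber_eq_zero_of_lt {n m : ℕ} (h : n < m) : eulerianNumber n m = 0 := by
  induction n generalizing m with
  | zero => obtain ⟨m, rfl⟩ := Nat.exists_eq_succ_of_ne_zero h.ne'; rfl
  | succ n ih =>
    obtain ⟨m, rfl⟩ := Nat.exists_eq_succ_of_ne_zero (Nat.ne_zero_of_lt h)
    simp [eulerianNumber, ih (by omega : n < m + 1), Nat.sub_eq_zero_of_le (by omega : n ≤ m)]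

theorem eulerianNumber_self {n : ℕ} (hn : n ≠ 0) : eulerianNumber n n = 0 := by
  obtain ⟨n, rfl⟩ := Nat.exists_eq_succ_of_ne_zero hn
  simp [eulerianNumber, eulerianNumber_eq_zero_of_lt (Nat.lt_succ_self n)]

section SigmoidDerivPoly

variable (R : Type*) [CommRing R]

noncomputable def sigmoidDerivPoly (n : ℕ) : R[X] :=
  ∑ m ∈ range (n + 1), C ((-1) ^ m * (eulerianNumber n m : R)) * (X ^ (m + 1) * (1 - X) ^ (n - m))

variable {R}

theorem derivative_X_pow_mul_one_sub_X_pow_mul (m k : ℕ) :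
    derivative (X ^ (m + 1) * (1 - X) ^ k : R[X]) * (X * (1 - X)) =
      C ((m : R) + 1) * (X ^ (m + 1) * (1 - X) ^ (k + 1)) -
        C (k : R) * (X ^ (m + 2) * (1 - X) ^ k) := by
  cases k <;> simp [derivative_mul, derivative_pow] <;> ring

theorem sigmoidDerivPoly_succ (n : ℕ) :
    derivative (sigmoidDerivPoly R n) * (X * (1 - X)) = sigmoidDerivPoly R (n + 1) := by
  let c : ℕ → ℕ → R := fun n m ↦ (-1) ^ m * (eulerianNumber n m : R)
  let rising : ℕ → R[X] := fun m ↦ C (c n m * ((m : R) + 1)) * (X ^ (m + 1) * (1 - X) ^ (n + 1 - m))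
  let falling : ℕ → R[X] := fun m ↦ C (c n m * (n - m : ℕ)) * (X ^ (m + 2) * (1 - X) ^ (n - m))
  have expand : derivative (sigmoidDerivPoly R n) * (X * (1 - X)) =
      ∑ m ∈ range (n + 1), rising m - ∑ m ∈ range (n + 1), falling m := by
    rw [sigmoidDerivPoly, derivative_sum, sum_mul, ← sum_sub_distrib]
    refine sum_congr rfl fun m hm ↦ ?_
    have hmn : n + 1 - m = n - m + 1 := by have := mem_range.1 hm; omega
    simp only [rising, falling, c, hmn, derivative_C_mul, mul_assoc,
      derivative_X_pow_mul_one_sub_X_pow_mul, C_mul]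
    ring
  have extend : ∑ m ∈ range (n + 1), rising m = ∑ m ∈ range (n + 2), rising m := by
    simp [sum_range_succ _ (n + 1), rising, c, eulerianNumber_eq_zero_of_lt (Nat.lt_succ_self n)]
  rw [expand, extend, sum_range_succ' rising, sigmoidDerivPoly, sum_range_succ' _ (n + 1),
    add_sub_right_comm, ← sum_sub_distrib]
  congr 1
  · refine sum_congr rfl fun m _ ↦ ?_
    simp only [rising, falling, c, Nat.add_sub_add_right, ← sub_mul, ← C_sub, eulerianNumber]
    congr 2
    push_cast
    ring
  · simp [rising, c, eulerianNumber_zero_right]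

end SigmoidDerivPoly

theorem hasDerivAt_log_one_add_exp (x : ℝ) :
    HasDerivAt (fun x ↦ log (1 + exp x)) (sigmoid x) x := by
  convert ((hasDerivAt_exp x).const_add 1).log (by positivity) using 1
  rw [sigmoid_def, exp_neg]
  field_simp
  ring

theorem iteratedDeriv_sigmoid (n : ℕ) (x : ℝ) :
    iteratedDeriv n sigmoid x = (sigmoidDerivPoly ℝ n).eval (sigmoid x) := by
  induction n generalizing x with
  | zero => simp [sigmoidDerivPoly, eulerianNumber]
  | succ n ih =>
    rw [iteratedDeriv_succ, funext ih, ← sigmoidDerivPoly_succ]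
    refine (((sigmoidDerivPoly ℝ n).hasDerivAt _).comp x (hasDerivAt_sigmoid x)).deriv.trans ?_
    simp only [eval_mul, eval_X, eval_sub, eval_one]

theorem sigmoidDerivPoly_eval_half (n : ℕ) :
    (sigmoidDerivPoly ℝ n).eval 2⁻¹ =
      (2 ^ (n + 1))⁻¹ * ∑ m ∈ range (n + 1), (-1 : ℝ) ^ m * eulerianNumber n m := by
  rw [sigmoidDerivPoly, eval_finsetSum, mul_sum]
  refine sum_congr rfl fun m hm ↦ ?_
  have hmn : m + 1 + (n - m) = n + 1 := by have := mem_range.1 hm; omega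
  simp only [eval_mul, eval_C, eval_pow, eval_X, eval_sub, eval_one]
  rw [show (1 : ℝ) - 2⁻¹ = 2⁻¹ by norm_num, ← pow_add, hmn, inv_pow]
  ring

/-- for `q ≥ 2`, the `q`-th derivative at `0` of `f(x) = log(1+exp x)` equals
`(1/2^q) * ∑_{m=0}^{q-2} (-1)^m A(q-1, m)`. -/
theorem iteratedDeriv_logistic_eq_eulerian_sum (q : ℕ) (hq : 2 ≤ q) :
    iteratedDeriv q (fun x : ℝ => Real.log (1 + Real.exp x)) 0 =
      (1 / 2 ^ q) * ∑ m ∈ Finset.range (q - 1), (-1 : ℝ) ^ m * (eulerianNumber (q - 1) m : ℝ) := by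
  obtain ⟨n, rfl⟩ : ∃ n, q = n + 1 := ⟨q - 1, by omega⟩
  have hderiv : deriv (fun x ↦ log (1 + exp x)) = sigmoid :=
    funext fun x ↦ (hasDerivAt_log_one_add_exp x).deriv
  rw [iteratedDeriv_succ', hderiv, iteratedDeriv_sigmoid, sigmoid_zero, sigmoidDerivPoly_eval_half,
    sum_range_succ, eulerianNumber_self (by omega : n ≠ 0), Nat.add_sub_cancel, one_div]
  simp
end

section
/- There exists a universal constant C > 0 such that for all integers q >= 1, |f^{(q)}(0) / q!| <= C / (q * pi^q), where f(x) = log(1 + exp(x)). -/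
/-!
The derivative of `f x = log (1 + exp x)` is the logistic function `σ z = (1 + exp (-z))⁻¹`,
meromorphic on `ℂ` with simple poles of residue `1` at the odd multiples of `π i`. Subtracting the
principal parts at `± π i` leaves a function holomorphic on the disc `‖z‖ < 2π`, so by Cauchy's
estimate on the circle of radius `π` its `n`-th derivative at `0` is `O(n! / π ^ n)`; each
principal part contributes `n! / π ^ (n + 1)`. Hence `σ^(n)(0) = O(n! / π ^ n)`, and
`f^(q)(0) / q! = σ^(q-1)(0) / (q (q - 1)!) = O(1 / (q π ^ q))`.
-/

open Complex Metric Filter Topology Set Asymptotics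
open scoped Nat Real

namespace Complex

variable {E : Type*} [NormedAddCommGroup E] [NormedSpace ℂ E] [CompleteSpace E]

theorem exists_differentiableOn_eqOn_sub_inv_smul {f : ℂ → E} {s : Set ℂ} {c : ℂ}
    {a : E} (hs : s ∈ 𝓝 c) (hf : DifferentiableOn ℂ f (s \ {c}))
    (ha : Tendsto (fun z => (z - c) • f z) (𝓝[≠] c) (𝓝 a)) :
    ∃ g : ℂ → E, DifferentiableOn ℂ g s ∧ EqOn g (fun z => f z - (z - c)⁻¹ • a) (s \ {c}) := by
  set h : ℂ → E := fun z => f z - (z - c)⁻¹ • a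
  have hd : DifferentiableOn ℂ h (s \ {c}) := by
    refine hf.sub fun z hz => (((differentiableAt_id.sub_const c).inv ?_).smul_const a)
      |>.differentiableWithinAt
    exact sub_ne_zero.mpr hz.2
  have hlim : Tendsto (fun z => (z - c) • (h z - h c)) (𝓝[≠] c) (𝓝 0) := by
    have hc : Tendsto (fun z => (z - c) • h c) (𝓝[≠] c) (𝓝 0) := by
      simpa using
        ((continuousWithinAt_id (x := c) (s := {c}ᶜ)).tendsto.sub_const c).smul_const (h c)
    refine ((ha.sub_const a).sub hc).congr' ?_ |>.trans (by simp)
    filter_upwards [self_mem_nhdsWithin] with z hz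
    simp [h, smul_sub, smul_smul, mul_inv_cancel₀ (sub_ne_zero.mpr hz)]
  have ho : (fun z => h z - h c) =o[𝓝[≠] c] fun z => (z - c)⁻¹ := by
    refine ((isBigO_refl (fun z => (z - c)⁻¹) _).smul_isLittleO
      ((isLittleO_one_iff ℂ).mpr hlim)).congr' ?_ (by simp)
    filter_upwards [self_mem_nhdsWithin] with z hz
    simp [smul_smul, inv_mul_cancel₀ (sub_ne_zero.mpr hz)]
  refine ⟨Function.update h c (limUnder (𝓝[≠] c) h),
    differentiableOn_update_limUnder_of_isLittleO hs hd ho, fun z hz => ?_⟩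
  exact Function.update_of_ne hz.2 _ _

theorem exists_norm_iteratedDeriv_le_of_differentiableOn_ball {f : ℂ → E} {c : ℂ} {r R : ℝ}
    (hr : 0 < r) (hrR : r < R) (hf : DifferentiableOn ℂ f (ball c R)) :
    ∃ M, ∀ n, ‖iteratedDeriv n f c‖ ≤ n ! * M / r ^ n := by
  obtain ⟨M, hM⟩ := (isCompact_sphere c r).exists_bound_of_continuousOn
    (hf.continuousOn.mono (sphere_subset_closedBall.trans (closedBall_subset_ball hrR)))
  exact ⟨M, fun n => norm_iteratedDeriv_le_of_forall_mem_sphere_norm_le n hr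
    (hf.diffContOnCl_ball (closedBall_subset_ball hrR)) hM⟩

end Complex

theorem norm_iteratedDeriv_inv_sub {𝕜 : Type*} [RCLike 𝕜] (n : ℕ) (c z : 𝕜) :
    ‖iteratedDeriv n (fun w => (w - c)⁻¹) z‖ = n ! / ‖z - c‖ ^ (n + 1) := by
  have := congrFun (iter_deriv_inv_linear_sub n 1 c) z
  simp only [one_mul, one_pow, mul_one] at this
  rw [iteratedDeriv_eq_iterate, this, norm_mul, norm_mul, norm_pow, norm_neg, norm_one, one_pow,
    one_mul, norm_zpow, RCLike.norm_natCast, div_eq_mul_inv, ← zpow_natCast, ← zpow_neg]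
  push_cast
  ring_nf

theorem iteratedDeriv_ofReal_eq {F : ℂ → ℂ} {u : ℝ → ℝ} {U : Set ℂ} (hU : IsOpen U)
    (hF : DifferentiableOn ℂ F U) (hUℝ : ∀ x : ℝ, (x : ℂ) ∈ U) (hFu : ∀ x : ℝ, F x = u x)
    (n : ℕ) (x : ℝ) : ((iteratedDeriv n u x : ℝ) : ℂ) = iteratedDeriv n F x := by
  induction n generalizing x with
  | zero => simp [hFu]
  | succ n ih =>
    have hd : HasDerivAt (iteratedDeriv n F) (iteratedDeriv (n + 1) F x) x := by
      rw [iteratedDeriv_succ, iteratedDeriv_eq_iterate]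
      exact (((hF.analyticOnNhd hU).iterated_deriv n).differentiableOn.differentiableAt
        (hU.mem_nhds (hUℝ x))).hasDerivAt
    have hre : iteratedDeriv n u = fun y : ℝ => (iteratedDeriv n F y).re := by
      ext y; rw [← ih, ofReal_re]
    have hu : HasDerivAt (iteratedDeriv n u) (iteratedDeriv (n + 1) F x).re x := by
      rw [hre]; exact hd.real_of_complex
    have hreal : ((iteratedDeriv (n + 1) F x).re : ℂ) = iteratedDeriv (n + 1) F x := by
      refine hu.ofReal_comp.unique ?_
      simpa only [ih] using hd.comp_ofReal
    rw [iteratedDeriv_succ, hu.deriv, hreal]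

namespace Complex

noncomputable def sigmoid (z : ℂ) : ℂ := (1 + exp (-z))⁻¹

@[simp, norm_cast]
theorem sigmoid_ofReal (x : ℝ) : sigmoid x = Real.sigmoid x := by
  simp [sigmoid, Real.sigmoid]

theorem differentiableAt_sigmoid {z : ℂ} (hz : 1 + exp (-z) ≠ 0) :
    DifferentiableAt ℂ sigmoid z :=
  ((differentiableAt_const 1).add (differentiableAt_id.neg.cexp)).inv hz

theorem tendsto_sub_mul_sigmoid {c : ℂ} (hc : exp (-c) = -1) :
    Tendsto (fun z => (z - c) * sigmoid z) (𝓝[≠] c) (𝓝 1) := by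
  have hderiv : HasDerivAt (fun z => 1 + exp (-z)) 1 c := by
    simpa [hc] using ((hasDerivAt_id c).neg.cexp).const_add 1
  have := (hasDerivAt_iff_tendsto_slope.mp hderiv).inv₀ one_ne_zero
  rw [inv_one] at this
  refine this.congr fun z => ?_
  simp [slope_def_field, hc, sigmoid, div_eq_mul_inv]

theorem eq_pi_mul_I_or_eq_neg_of_one_add_exp_neg_eq_zero {z : ℂ} (hz : ‖z‖ < 3 * π)
    (h : 1 + exp (-z) = 0) : z = π * I ∨ z = -(π * I) := by
  obtain ⟨n, hn⟩ := exp_eq_exp_iff_exists_int.mp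
    (show exp (-z) = exp (π * I) by rw [exp_pi_mul_I]; linear_combination h)
  have hz' : z = -((π * (2 * n + 1) : ℝ) * I) := by push_cast; linear_combination -hn
  have hlt : |π * (2 * n + 1)| < π * 3 := by
    simpa [hz', mul_comm _ (3 : ℝ)] using (abs_im_le_norm z).trans_lt hz
  rw [abs_mul, abs_of_pos Real.pi_pos, mul_lt_mul_iff_right₀ Real.pi_pos, abs_lt] at hlt
  obtain rfl | rfl : n = 0 ∨ n = -1 := by
    have : -3 < 2 * n + 1 ∧ 2 * n + 1 < 3 := by exact_mod_cast hlt
    omega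
  · right; simpa using hz'
  · left; rw [hz']; push_cast; ring

theorem exists_differentiableOn_eqOn_sigmoid_sub_inv :
    ∃ H : ℂ → ℂ, DifferentiableOn ℂ H (ball 0 (2 * π)) ∧
      EqOn H (fun z => sigmoid z - (z - π * I)⁻¹ - (z + π * I)⁻¹)
        (ball 0 (2 * π) \ {π * I, -(π * I)}) := by
  set c := π * I
  have hc : exp (-c) = -1 := by simp [c, exp_neg, exp_pi_mul_I]
  have hc' : exp (-(-c)) = -1 := by simp [c, exp_pi_mul_I]
  have hcc : c ≠ -c := by rw [ne_eq, self_eq_neg]; simp [c, Real.pi_ne_zero]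
  have hsig : DifferentiableOn ℂ sigmoid (ball 0 (2 * π) \ {c, -c}) := by
    rintro z ⟨hz, hzc⟩
    refine (differentiableAt_sigmoid fun h => hzc ?_).differentiableWithinAt
    have := eq_pi_mul_I_or_eq_neg_of_one_add_exp_neg_eq_zero
      ((mem_ball_zero_iff.mp hz).trans (by linarith [Real.pi_pos])) h
    simpa using this
  have hball : ∀ {z : ℂ}, ‖z‖ = π → z ∈ ball (0 : ℂ) (2 * π) := fun hz => by
    simp [hz, Real.pi_pos]
  have hcb : c ∈ ball (0 : ℂ) (2 * π) := hball (by simp [c, abs_of_pos Real.pi_pos])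
  have hncb : -c ∈ ball (0 : ℂ) (2 * π) := hball (by simp [c, abs_of_pos Real.pi_pos])
  obtain ⟨F, hFd, hFeq⟩ := exists_differentiableOn_eqOn_sub_inv_smul (c := c) (a := (1 : ℂ))
    ((isOpen_ball.sdiff isClosed_singleton).mem_nhds ⟨hcb, hcc⟩)
    (hsig.mono fun z hz => ⟨hz.1.1, by
      simp only [mem_insert_iff, mem_singleton_iff, not_or]; exact ⟨hz.2, hz.1.2⟩⟩)
    (by simpa using tendsto_sub_mul_sigmoid hc)
  have hFlim : Tendsto (fun z => (z - -c) • F z) (𝓝[≠] (-c)) (𝓝 1) := by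
    have hpole : ContinuousAt (fun z => (z - -c) * (z - c)⁻¹) (-c) :=
      (continuousAt_id.sub continuousAt_const).mul
        ((continuousAt_id.sub continuousAt_const).inv₀ (sub_ne_zero.mpr hcc.symm))
    have := (tendsto_sub_mul_sigmoid hc').sub (hpole.tendsto.mono_left nhdsWithin_le_nhds)
    simp only [sub_self, zero_mul, sub_zero] at this
    refine this.congr' ?_
    filter_upwards [self_mem_nhdsWithin, nhdsWithin_le_nhds <|
      (isOpen_ball.sdiff isClosed_singleton).mem_nhds
      (show -c ∈ ball (0 : ℂ) (2 * π) \ {c} from ⟨hncb, hcc.symm⟩)] with z hz hz'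
    rw [hFeq ⟨⟨hz'.1, hz⟩, hz'.2⟩]
    simp only [smul_eq_mul]
    ring
  obtain ⟨H, hHd, hHeq⟩ := exists_differentiableOn_eqOn_sub_inv_smul (isOpen_ball.mem_nhds hncb)
    hFd hFlim
  refine ⟨H, hHd, fun z hz => ?_⟩
  have hz' : z ≠ c ∧ z ≠ -c := by simpa [not_or] using hz.2
  rw [hHeq ⟨hz.1, hz'.2⟩]
  simp only [hFeq ⟨⟨hz.1, hz'.2⟩, hz'.1⟩, smul_eq_mul, mul_one, sub_neg_eq_add]

theorem exists_norm_iteratedDeriv_sigmoid_zero_le :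
    ∃ C, 0 < C ∧ ∀ n, ‖iteratedDeriv n sigmoid 0‖ ≤ n ! * C / π ^ n := by
  obtain ⟨H, hHd, hHeq⟩ := exists_differentiableOn_eqOn_sigmoid_sub_inv
  obtain ⟨M, hM⟩ := exists_norm_iteratedDeriv_le_of_differentiableOn_ball Real.pi_pos
    (by linarith [Real.pi_pos]) hHd
  have hM0 : 0 ≤ M := (norm_nonneg _).trans (by simpa using hM 0)
  have hnorm : ‖π * I‖ = π := by simp [abs_of_pos Real.pi_pos]
  have hloc : sigmoid =ᶠ[𝓝 0]
      fun w => H w + (w - π * I)⁻¹ + (w - -(π * I))⁻¹ := by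
    filter_upwards [ball_mem_nhds (0 : ℂ) Real.pi_pos] with z hz
    have hz' := mem_ball_zero_iff.mp hz
    have hzc : z ∉ ({π * I, -(π * I)} : Set ℂ) := by
      rintro (rfl | rfl) <;> simp [abs_of_pos Real.pi_pos] at hz'
    rw [hHeq ⟨ball_subset_ball (by linarith [Real.pi_pos]) hz, hzc⟩]
    ring
  refine ⟨M + 2 / π, by positivity, fun n => ?_⟩
  have hH : ContDiffAt ℂ n H 0 :=
    (hHd.analyticOnNhd isOpen_ball 0 (mem_ball_self (by positivity))).contDiffAt
  have hinv : ∀ c : ℂ, c ≠ 0 → ContDiffAt ℂ n (fun w => (w - c)⁻¹) 0 := fun c hc =>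
    (contDiffAt_id.sub contDiffAt_const).inv (by simpa using hc)
  have hpi : π * I ≠ 0 := by simp [Real.pi_ne_zero]
  rw [hloc.iteratedDeriv_eq n,
    iteratedDeriv_fun_add (hH.add (hinv _ hpi)) (hinv _ (neg_ne_zero.mpr hpi)),
    iteratedDeriv_fun_add hH (hinv _ hpi)]
  calc _ ≤ ‖iteratedDeriv n H 0‖ + ‖iteratedDeriv n (fun w => (w - π * I)⁻¹) 0‖
        + ‖iteratedDeriv n (fun w => (w - -(π * I))⁻¹) 0‖ := norm_add₃_le
    _ ≤ n ! * M / π ^ n + n ! / π ^ (n + 1) + n ! / π ^ (n + 1) := by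
      simp only [norm_iteratedDeriv_inv_sub, zero_sub, neg_neg, norm_neg, hnorm]
      gcongr
      exact hM n
    _ = n ! * (M + 2 / π) / π ^ n := by
      field_simp
      ring

theorem ofReal_iteratedDeriv_sigmoid (n : ℕ) (x : ℝ) :
    ((iteratedDeriv n Real.sigmoid x : ℝ) : ℂ) = iteratedDeriv n sigmoid x :=
  iteratedDeriv_ofReal_eq (U := {z | 1 + exp (-z) ≠ 0})
    (isOpen_ne_fun (by fun_prop) continuous_const)
    (fun _ hz => (differentiableAt_sigmoid hz).differentiableWithinAt)
    (fun x => by rw [mem_ofPred_eq]; exact_mod_cast (show 1 + Real.exp (-x) ≠ 0 by positivity))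
    sigmoid_ofReal n x

end Complex

theorem deriv_log_one_add_exp : deriv (fun x => Real.log (1 + Real.exp x)) = Real.sigmoid := by
  ext x
  rw [(((Real.hasDerivAt_exp x).const_add 1).log (by positivity)).deriv, Real.sigmoid,
    Real.exp_neg]
  field_simp
  ring

/-- there is a universal constant `C > 0` such that for all `q ≥ 1`,
`|f^{(q)}(0)/q!| ≤ C / (q * π^q)` where `f(x) = log(1 + exp x)`. -/
theorem taylor_coeff_logistic_bound :
    ∃ C : ℝ, 0 < C ∧ ∀ q : ℕ, 1 ≤ q →
      |iteratedDeriv q (fun x : ℝ => Real.log (1 + Real.exp x)) 0 / (Nat.factorial q : ℝ)| ≤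
        C / (q * Real.pi ^ q) := by
  obtain ⟨C, hC, hbound⟩ := Complex.exists_norm_iteratedDeriv_sigmoid_zero_le
  refine ⟨π * C, by positivity, fun q hq => ?_⟩
  obtain ⟨n, rfl⟩ := Nat.exists_eq_add_of_le' hq
  have hσ : |iteratedDeriv n Real.sigmoid 0| ≤ n ! * C / π ^ n := by
    rw [← Real.norm_eq_abs, ← Complex.norm_real, Complex.ofReal_iteratedDeriv_sigmoid,
      Complex.ofReal_zero]
    exact hbound n
  rw [iteratedDeriv_succ', deriv_log_one_add_exp, abs_div, Nat.abs_cast, Nat.factorial_succ,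
    Nat.cast_mul]
  calc _ ≤ n ! * C / π ^ n / ((n + 1 : ℕ) * n !) := by gcongr
    _ = π * C / ((n + 1 : ℕ) * π ^ (n + 1)) := by
      field_simp
      ring
end

section
/- With Z_t = W_t ⊙ X_t where W_t has i.i.d. Bernoulli(p) entries independent of X, the estimator L^{(2)}_{Z,p}(a) = (1/T) sum_t [ (a^T Z_t)/(2p) - Z_{t+1,m}(a^T Z_t)/p^2 + sum_{i≠j} a_i a_j Z_{t,i} Z_{t,j} / (8 p^2) + sum_i a_i^2 Z_{t,i} / (8p) ] satisfies E[L^{(2)}_{Z,p}(a) | X] = (1/T) sum_t [ (a^T X_t)/2 - X_{t+1,m}(a^T X_t) + (a^T X_t)^2 / 8 ] for every vector a. -/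
open MeasureTheory ProbabilityTheory

/-! Conditionally on `X`, the masked observations `Z = W ⊙ X` have first moments `p X` and,
for distinct coordinates, mixed second moments `p² X X'`, by independence of the masks. Each
term of the estimator is a first or mixed second moment rescaled by the matching power of `p`,
so its expectation replaces every `Z` by `X`. What remains is the identity
`(aᵀx)² = ∑_{i ≠ j} aᵢ aⱼ xᵢ xⱼ + ∑ᵢ aᵢ² xᵢ`, valid because `xᵢ² = xᵢ` for binary `x`. -/

section ZeroOne

variable {Ω : Type*} [MeasurableSpace Ω] {μ : Measure Ω} {f : Ω → ℝ}

theorem memLp_of_forall_eq_zero_or_one [IsFiniteMeasure μ] (hf : Measurable f)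
    (h01 : ∀ ω, f ω = 0 ∨ f ω = 1) (q : ENNReal) : MemLp f q μ :=
  MemLp.of_bound hf.aestronglyMeasurable 1 <| ae_of_all _ fun ω => by
    rcases h01 ω with h | h <;> simp [h]

theorem integral_eq_measureReal_of_forall_eq_zero_or_one (hf : Measurable f)
    (h01 : ∀ ω, f ω = 0 ∨ f ω = 1) : ∫ ω, f ω ∂μ = μ.real {ω | f ω = 1} := by
  have hind : ∀ ω, f ω = (f ⁻¹' {1}).indicator 1 ω := fun ω => by
    rcases h01 ω with h | h <;> simp [Set.indicator, h]
  rw [integral_congr_ae (ae_of_all _ hind),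
    integral_indicator_one (hf (measurableSet_singleton 1))]
  rfl

end ZeroOne

theorem sq_sum_mul_eq_offDiag_add_diag {ι : Type*} [Fintype ι] [DecidableEq ι] (a x : ι → ℝ)
    (hx : ∀ i, x i * x i = x i) :
    (∑ i, a i * x i) ^ 2 =
      ∑ i, ∑ j, (if i ≠ j then a i * a j * x i * x j else 0) + ∑ i, a i ^ 2 * x i := by
  have hsplit : ∀ i j, a i * x i * (a j * x j) =
      (if i ≠ j then a i * a j * x i * x j else 0) + if i = j then a i ^ 2 * x i else 0 := by
    intro i j
    by_cases hij : i = j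
    · subst hij
      simp only [ne_eq, not_true_eq_false, if_false, if_true, zero_add]
      linear_combination a i ^ 2 * hx i
    · simp only [ne_eq, hij, not_false_eq_true, if_true, if_false, add_zero]
      ring
  rw [sq, Finset.sum_mul_sum]
  simp_rw [hsplit, Finset.sum_add_distrib, Finset.sum_ite_eq, Finset.mem_univ, if_true]

section DegreeTwoLoss

variable {ι : Type*} [Fintype ι] [DecidableEq ι]

/-- The summand of `L^{(2)}_{Z,p}(a)` at one time step, with `z = Z_t` and `y = Z_{t+1,m}`. -/
noncomputable def degreeTwoLossTerm (p : ℝ) (a z : ι → ℝ) (y : ℝ) : ℝ :=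
  (∑ i, a i * z i) / (2 * p) - y * (∑ i, a i * z i) / p ^ 2
    + (∑ i, ∑ j, if i ≠ j then a i * a j * z i * z j / (8 * p ^ 2) else 0)
    + ∑ i, a i ^ 2 * z i / (8 * p)

theorem degreeTwoLossTerm_eq (p : ℝ) (a z : ι → ℝ) (y : ℝ) :
    degreeTwoLossTerm p a z y =
      (∑ i, a i * z i) / (2 * p) - (∑ i, a i * (y * z i)) / p ^ 2
        + ∑ i, ∑ j, (if i ≠ j then a i * a j / (8 * p ^ 2) else 0) * (z i * z j)
        + ∑ i, a i ^ 2 * z i / (8 * p) := by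
  have hoffDiag : ∀ i j, (if i ≠ j then a i * a j * z i * z j / (8 * p ^ 2) else 0) =
      (if i ≠ j then a i * a j / (8 * p ^ 2) else 0) * (z i * z j) := by
    intro i j
    split_ifs <;> ring
  simp_rw [degreeTwoLossTerm, hoffDiag, Finset.mul_sum, mul_left_comm y]

variable {Ω : Type*} [MeasurableSpace Ω] {μ : Measure Ω} [IsFiniteMeasure μ]
  {Z : ι → Ω → ℝ} {Y : Ω → ℝ}

theorem integrable_degreeTwoLossTerm (p : ℝ) (a : ι → ℝ) (hZ : ∀ i, MemLp (Z i) 2 μ)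
    (hY : MemLp Y 2 μ) : Integrable (fun ω => degreeTwoLossTerm p a (Z · ω) (Y ω)) μ := by
  have hZi i : Integrable (Z i) μ := (hZ i).integrable one_le_two
  have hZZ i j : Integrable (fun ω => Z i ω * Z j ω) μ := (hZ i).integrable_mul (hZ j)
  have hYZ i : Integrable (fun ω => Y ω * Z i ω) μ := hY.integrable_mul (hZ i)
  simp only [degreeTwoLossTerm_eq]
  fun_prop

theorem integral_degreeTwoLossTerm {z : ι → ℝ} {y p : ℝ} (a : ι → ℝ) (hp : p ≠ 0)
    (hZ : ∀ i, MemLp (Z i) 2 μ) (hY : MemLp Y 2 μ)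
    (hEZ : ∀ i, ∫ ω, Z i ω ∂μ = p * z i)
    (hEZZ : ∀ i j, i ≠ j → ∫ ω, Z i ω * Z j ω ∂μ = p ^ 2 * (z i * z j))
    (hEYZ : ∀ i, ∫ ω, Y ω * Z i ω ∂μ = p ^ 2 * y * z i)
    (hz : ∀ i, z i * z i = z i) :
    ∫ ω, degreeTwoLossTerm p a (Z · ω) (Y ω) ∂μ
      = (∑ i, a i * z i) / 2 - y * (∑ i, a i * z i) + (∑ i, a i * z i) ^ 2 / 8 := by
  have hZi i : Integrable (Z i) μ := (hZ i).integrable one_le_two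
  have hZZ i j : Integrable (fun ω => Z i ω * Z j ω) μ := (hZ i).integrable_mul (hZ j)
  have hYZ i : Integrable (fun ω => Y ω * Z i ω) μ := hY.integrable_mul (hZ i)
  have hoffDiag : ∀ i j,
      (if i ≠ j then a i * a j / (8 * p ^ 2) else 0) * ∫ ω, Z i ω * Z j ω ∂μ =
        (if i ≠ j then a i * a j * z i * z j else 0) / 8 := by
    intro i j
    split_ifs with hij
    · rw [hEZZ i j hij]
      field_simp
    · rw [zero_mul, zero_div]
  have hpull : ∀ (b : ι → ℝ) (c : ℝ), ∑ i, b i * (c * z i) = c * ∑ i, b i * z i := by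
    intro b c
    rw [Finset.mul_sum]
    exact Finset.sum_congr rfl fun i _ => by ring
  simp (disch := fun_prop) only [degreeTwoLossTerm_eq, integral_add, integral_sub, integral_div,
    integral_finsetSum, integral_const_mul, hEZ, hEYZ, hoffDiag]
  simp only [← Finset.sum_div, hpull]
  rw [sq_sum_mul_eq_offDiag_add_diag a z hz]
  field_simp
  ring

end DegreeTwoLoss

theorem unbiased_degree_two_loss_general {Ω : Type*} [MeasurableSpace Ω] {μ : Measure Ω}
    [IsProbabilityMeasure μ] {M : ℕ} (T : ℕ) (m : Fin M)
    (p : ℝ) (hp : 0 < p)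
    (W : ℕ → Fin M → Ω → ℝ) (X : ℕ → Fin M → ℝ) (a : Fin M → ℝ)
    (hWval : ∀ t i ω, W t i ω = 0 ∨ W t i ω = 1)
    (hWmeas : ∀ t i, Measurable (W t i))
    (hWind : iIndepFun
      (fun q : ℕ × Fin M => W q.1 q.2) μ)
    (hWp : ∀ t i, (μ {ω | W t i ω = 1}).toReal = p)
    (hXval : ∀ t i, X t i = 0 ∨ X t i = 1) :
    (∫ ω,
        (1 / (T : ℝ)) * ∑ t ∈ Finset.range T,
          ((∑ i, a i * (W t i ω * X t i)) / (2 * p)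
            - (W (t + 1) m ω * X (t + 1) m) * (∑ i, a i * (W t i ω * X t i)) / p ^ 2
            + (∑ i, ∑ j, if i ≠ j then
                a i * a j * (W t i ω * X t i) * (W t j ω * X t j) / (8 * p ^ 2) else 0)
            + ∑ i, a i ^ 2 * (W t i ω * X t i) / (8 * p)) ∂μ) =
      (1 / (T : ℝ)) * ∑ t ∈ Finset.range T,
        ((∑ i, a i * X t i) / 2
          - X (t + 1) m * (∑ i, a i * X t i)
          + (∑ i, a i * X t i) ^ 2 / 8) := by
  have hZL2 t i : MemLp (fun ω => W t i ω * X t i) 2 μ :=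
    (memLp_of_forall_eq_zero_or_one (hWmeas t i) (hWval t i) 2).mul_const (X t i)
  have hEW t i : ∫ ω, W t i ω ∂μ = p :=
    (integral_eq_measureReal_of_forall_eq_zero_or_one (hWmeas t i) (hWval t i)).trans (hWp t i)
  have hEWW t i s j (hne : (t, i) ≠ (s, j)) : ∫ ω, W t i ω * W s j ω ∂μ = p ^ 2 := by
    rw [(hWind.indepFun hne).integral_fun_mul_eq_mul_integral (hWmeas t i).aestronglyMeasurable
      (hWmeas s j).aestronglyMeasurable, hEW, hEW, sq]
  have hEZZ t i s j (hne : (t, i) ≠ (s, j)) :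
      ∫ ω, W t i ω * X t i * (W s j ω * X s j) ∂μ = p ^ 2 * (X t i * X s j) := by
    simp_rw [mul_mul_mul_comm _ (X t i)]
    rw [integral_mul_const, hEWW t i s j hne]
  have hX t i : X t i * X t i = X t i := by rcases hXval t i with h | h <;> simp [h]
  rw [integral_const_mul, integral_finsetSum]
  · congr 1
    refine Finset.sum_congr rfl fun t _ => integral_degreeTwoLossTerm a hp.ne' (hZL2 t)
      (hZL2 (t + 1) m) (fun i => by rw [integral_mul_const, hEW])
      (fun i j hij => hEZZ t i t j (by simp [hij]))
      (fun i => by rw [hEZZ _ _ _ _ (by simp), mul_assoc]) (hX t)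
  · exact fun t _ => integrable_degreeTwoLossTerm p a (hZL2 t) (hZL2 (t + 1) m)

/-- unbiasedness of the degree-2 missing-data loss. With `Z_{t,i} = W_{t,i} X_{t,i}`
where `X ∈ {0,1}` is fixed (conditioning on `X`) and the `W_{t,i}` are i.i.d. Bernoulli(p),
`E[L^{(2)}_{Z,p}(a) | X]` equals the degree-2 Taylor truncation of the complete-data loss. -/
theorem unbiased_degree_two_loss {Ω : Type*} [MeasurableSpace Ω] {μ : Measure Ω}
    [IsProbabilityMeasure μ] {M : ℕ} (T : ℕ) (hT : 0 < T) (m : Fin M)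
    (p : ℝ) (hp : 0 < p) (hp1 : p ≤ 1)
    (W : ℕ → Fin M → Ω → ℝ) (X : ℕ → Fin M → ℝ) (a : Fin M → ℝ)
    (hWval : ∀ t i ω, W t i ω = 0 ∨ W t i ω = 1)
    (hWmeas : ∀ t i, Measurable (W t i))
    (hWind : iIndepFun
      (fun q : ℕ × Fin M => W q.1 q.2) μ)
    (hWp : ∀ t i, (μ {ω | W t i ω = 1}).toReal = p)
    (hXval : ∀ t i, X t i = 0 ∨ X t i = 1) :
    (∫ ω,
        (1 / (T : ℝ)) * ∑ t ∈ Finset.range T,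
          ((∑ i, a i * (W t i ω * X t i)) / (2 * p)
            - (W (t + 1) m ω * X (t + 1) m) * (∑ i, a i * (W t i ω * X t i)) / p ^ 2
            + (∑ i, ∑ j, if i ≠ j then
                a i * a j * (W t i ω * X t i) * (W t j ω * X t j) / (8 * p ^ 2) else 0)
            + ∑ i, a i ^ 2 * (W t i ω * X t i) / (8 * p)) ∂μ) =
      (1 / (T : ℝ)) * ∑ t ∈ Finset.range T,
        ((∑ i, a i * X t i) / 2
          - X (t + 1) m * (∑ i, a i * X t i)
          + (∑ i, a i * X t i) ^ 2 / 8) :=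
  unbiased_degree_two_loss_general T m p hp W X a hWval hWmeas hWind hWp hXval
end
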